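/- The function x ↦ E(x) + √(1-x)·K(x) is strictly decreasing on (0,1), with limit π as x → 0⁺ and limit 1 as x → 1⁻. -/

import Mathlib

/-!
With `Δ(x, t) = 1 - x sin² t`, the function equals `∫₀^{π/2} (√Δ + √(1 - x) / √Δ) dt`. For each `t`
the integrand is nonincreasing in `x`, strictly at `t = 0`, which gives strict monotonicity. It is
bounded by `2`, equals `2` at `x = 0` and `|cos t|` at `x = 1`, so dominated convergence yields the
limits `π` and `∫₀^{π/2} cos t dt = 1`.
-/

open Real Set Filter Topology MeasureTheory

noncomputable def K (x : ℝ) : ℝ :=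
  ∫ t in (0 : ℝ)..(π / 2), (1 - x * Real.sin t ^ 2) ^ (-(1/2) : ℝ)

noncomputable def E (x : ℝ) : ℝ :=
  ∫ t in (0 : ℝ)..(π / 2), (1 - x * Real.sin t ^ 2) ^ ((1/2) : ℝ)

noncomputable def ekIntegrand (x t : ℝ) : ℝ :=
  √(1 - x * sin t ^ 2) + √(1 - x) / √(1 - x * sin t ^ 2)

lemma one_sub_mul_sin_sq_pos {x : ℝ} (hx : x < 1) (t : ℝ) : 0 < 1 - x * sin t ^ 2 := by
  rcases le_or_gt x 0 with h | h
  · nlinarith [sq_nonneg (sin t)]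
  · nlinarith [sin_sq_le_one t]

lemma continuous_sqrt_one_sub_mul_sin_sq (x : ℝ) : Continuous fun t => √(1 - x * sin t ^ 2) := by
  fun_prop

lemma continuous_ekIntegrand {x : ℝ} (hx : x < 1) : Continuous (ekIntegrand x) :=
  (continuous_sqrt_one_sub_mul_sin_sq x).add <| continuous_const.div
    (continuous_sqrt_one_sub_mul_sin_sq x) fun t => (sqrt_pos.2 (one_sub_mul_sin_sq_pos hx t)).ne'

lemma E_add_sqrt_mul_K_eq_integral {x : ℝ} (hx : x < 1) :
    E x + √(1 - x) * K x = ∫ t in (0 : ℝ)..(π / 2), ekIntegrand x t := by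
  have hpos := one_sub_mul_sin_sq_pos hx
  have hE : E x = ∫ t in (0 : ℝ)..(π / 2), √(1 - x * sin t ^ 2) :=
    intervalIntegral.integral_congr fun t _ => (sqrt_eq_rpow _).symm
  have hK : K x = ∫ t in (0 : ℝ)..(π / 2), (√(1 - x * sin t ^ 2))⁻¹ :=
    intervalIntegral.integral_congr fun t _ => by
      simp only [rpow_neg (hpos t).le, ← sqrt_eq_rpow]
  have hcont := continuous_sqrt_one_sub_mul_sin_sq x
  have hinv : Continuous fun t => (√(1 - x * sin t ^ 2))⁻¹ :=
    hcont.inv₀ fun t => (sqrt_pos.2 (hpos t)).ne'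
  rw [hE, hK, ← intervalIntegral.integral_const_mul, ← intervalIntegral.integral_add
    (hcont.intervalIntegrable _ _) ((hinv.intervalIntegrable _ _).const_mul _)]
  simp only [ekIntegrand, div_eq_mul_inv]

lemma ekIntegrand_le_of_le {x y : ℝ} (hxy : x ≤ y) (hy : y < 1) (t : ℝ) :
    ekIntegrand y t ≤ ekIntegrand x t := by
  have hs₀ := sq_nonneg (sin t)
  have hs₁ := sin_sq_le_one t
  have hx := one_sub_mul_sin_sq_pos (hxy.trans_lt hy) t
  have hy' := one_sub_mul_sin_sq_pos hy t
  have hfirst : √(1 - y * sin t ^ 2) ≤ √(1 - x * sin t ^ 2) := sqrt_le_sqrt (by nlinarith)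
  -- cross-multiplied: `(1 - y)(1 - x s) ≤ (1 - x)(1 - y s)` reduces to `(x - y)(1 - s) ≤ 0`
  have hsecond : √(1 - y) / √(1 - y * sin t ^ 2) ≤ √(1 - x) / √(1 - x * sin t ^ 2) := by
    rw [div_le_div_iff₀ (sqrt_pos.2 hy') (sqrt_pos.2 hx), ← sqrt_mul (by linarith),
      ← sqrt_mul (by linarith)]
    exact sqrt_le_sqrt (by nlinarith)
  exact add_le_add hfirst hsecond

lemma ekIntegrand_zero_right (x : ℝ) : ekIntegrand x 0 = 1 + √(1 - x) := by
  simp [ekIntegrand]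

lemma strictAntiOn_integral_ekIntegrand :
    StrictAntiOn (fun x => ∫ t in (0 : ℝ)..(π / 2), ekIntegrand x t) (Iio 1) := by
  intro x (hx : x < 1) y (hy : y < 1) hxy
  have hpi : (0 : ℝ) < π / 2 := by positivity
  refine intervalIntegral.integral_lt_integral_of_continuousOn_of_le_of_exists_lt hpi
    (continuous_ekIntegrand hy).continuousOn (continuous_ekIntegrand hx).continuousOn
    (fun t _ => ekIntegrand_le_of_le hxy.le hy t) ⟨0, ⟨le_rfl, hpi.le⟩, ?_⟩
  rw [ekIntegrand_zero_right, ekIntegrand_zero_right]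
  gcongr

lemma norm_ekIntegrand_le_two {x : ℝ} (hx₀ : 0 ≤ x) (hx₁ : x < 1) (t : ℝ) :
    ‖ekIntegrand x t‖ ≤ 2 := by
  have hfirst : √(1 - x * sin t ^ 2) ≤ 1 := sqrt_le_one.2 (by nlinarith [sq_nonneg (sin t)])
  have hsecond : √(1 - x) / √(1 - x * sin t ^ 2) ≤ 1 :=
    div_le_one_of_le₀ (sqrt_le_sqrt (by nlinarith [sin_sq_le_one t])) (sqrt_nonneg _)
  rw [norm_of_nonneg (by unfold ekIntegrand; positivity)]
  unfold ekIntegrand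
  linarith

lemma continuousAt_ekIntegrand_left {c t : ℝ} (hc : 0 < 1 - c * sin t ^ 2) :
    ContinuousAt (fun x => ekIntegrand x t) c := by
  unfold ekIntegrand
  exact ContinuousAt.add (by fun_prop) <| ContinuousAt.div (by fun_prop) (by fun_prop)
    (sqrt_pos.2 hc).ne'

lemma tendsto_integral_ekIntegrand {c : ℝ}
    (hc : ∀ᵐ t, t ∈ uIoc 0 (π / 2) → ContinuousAt (fun x => ekIntegrand x t) c) :
    Tendsto (fun x => ∫ t in (0 : ℝ)..(π / 2), ekIntegrand x t) (𝓝[Ioo 0 1] c)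
      (𝓝 (∫ t in (0 : ℝ)..(π / 2), ekIntegrand c t)) := by
  refine intervalIntegral.tendsto_integral_filter_of_dominated_convergence (fun _ => 2)
    ?_ ?_ intervalIntegrable_const ?_
  · filter_upwards [self_mem_nhdsWithin] with x hx
    exact (continuous_ekIntegrand hx.2).aestronglyMeasurable
  · filter_upwards [self_mem_nhdsWithin] with x hx
    exact ae_of_all _ fun t _ => norm_ekIntegrand_le_two hx.1.le hx.2 t
  · filter_upwards [hc] with t ht hmem
    exact (ht hmem).tendsto.mono_left nhdsWithin_le_nhds

lemma integral_ekIntegrand_zero : ∫ t in (0 : ℝ)..(π / 2), ekIntegrand 0 t = π := by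
  simp only [ekIntegrand, zero_mul, sub_zero, sqrt_one, div_one, intervalIntegral.integral_const]
  norm_num

lemma ekIntegrand_one (t : ℝ) : ekIntegrand 1 t = |cos t| := by
  simp [ekIntegrand, ← cos_sq', sqrt_sq_eq_abs]

lemma integral_ekIntegrand_one : ∫ t in (0 : ℝ)..(π / 2), ekIntegrand 1 t = 1 := by
  have hpi : (0 : ℝ) ≤ π / 2 := by positivity
  rw [intervalIntegral.integral_congr (g := cos) fun t ht => ?_]
  · simp
  · rw [uIcc_of_le hpi] at ht
    rw [ekIntegrand_one, abs_of_nonneg (cos_nonneg_of_mem_Icc ⟨by linarith [ht.1], ht.2⟩)]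

-- continuity in `x` fails only at `t = π / 2`, where `1 - sin² t` vanishes
lemma ae_continuousAt_ekIntegrand_one :
    ∀ᵐ t, t ∈ uIoc 0 (π / 2) → ContinuousAt (fun x => ekIntegrand x t) 1 := by
  filter_upwards [volume.ae_ne (π / 2)] with t hne hmem
  rw [uIoc_of_le (by positivity)] at hmem
  have hcos : 0 < cos t := cos_pos_of_mem_Ioo ⟨by linarith [hmem.1, pi_pos], hmem.2.lt_of_ne hne⟩
  exact continuousAt_ekIntegrand_left (by rw [one_mul, ← cos_sq']; positivity)

theorem stmt4 :
    StrictAntiOn (fun x : ℝ => E x + Real.sqrt (1 - x) * K x) (Ioo 0 1) ∧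
    Tendsto (fun x : ℝ => E x + Real.sqrt (1 - x) * K x) (nhdsWithin 0 (Ioo 0 1)) (nhds π) ∧
    Tendsto (fun x : ℝ => E x + Real.sqrt (1 - x) * K x) (nhdsWithin 1 (Ioo 0 1)) (nhds 1) := by
  have heq : EqOn (fun x => E x + √(1 - x) * K x)
      (fun x => ∫ t in (0 : ℝ)..(π / 2), ekIntegrand x t) (Ioo 0 1) :=
    fun x hx => E_add_sqrt_mul_K_eq_integral hx.2
  refine ⟨fun x hx y hy hxy => ?_, ?_, ?_⟩
  · rw [heq hx, heq hy]
    exact strictAntiOn_integral_ekIntegrand hx.2 hy.2 hxy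
  · refine (tendsto_congr' heq.eventuallyEq_nhdsWithin).2 ?_
    have h := tendsto_integral_ekIntegrand (c := 0) <| ae_of_all _ fun t _ =>
      continuousAt_ekIntegrand_left (by simp)
    rwa [integral_ekIntegrand_zero] at h
  · refine (tendsto_congr' heq.eventuallyEq_nhdsWithin).2 ?_
    have h := tendsto_integral_ekIntegrand ae_continuousAt_ekIntegrand_one
    rwa [integral_ekIntegrand_one] at h
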